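/- arXiv:2501.12565 — 5 statements merged into one kernel-verified Lean document; each statement's English description precedes it below -/
import Mathlib

section
/- Any board of 5 distinct points in F_3^4 contains at most 2 sets. -/
abbrev Pt := Fin 4 → ZMod 3

def numSets (B : Finset Pt) : ℕ :=
  ((B.powersetCard 3).filter (fun S => S.sum id = 0)).card

def IsMagicSquare (B : Finset Pt) : Prop :=
  ∃ (p : Pt) (V : Submodule (ZMod 3) Pt), Module.finrank (ZMod 3) V = 2 ∧
    (B : Set Pt) = (fun v => p + v) '' (V : Set Pt)

/-! Two distinct sets meet in at most one point, since a set is determined by any two of its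
points. Three distinct sets therefore cover at least `3 + 3 + 3 - 3 = 6` points. -/

namespace Finset

theorem card_add_card_add_card_le_card_union_add_card_inter {α : Type*} [DecidableEq α]
    (s t u : Finset α) :
    #s + #t + #u ≤ #(s ∪ t ∪ u) + #(s ∩ t) + #(s ∩ u) + #(t ∩ u) := by
  have hst := card_union_add_card_inter s t
  have hstu := card_union_add_card_inter (s ∪ t) u
  have hinter : #((s ∪ t) ∩ u) ≤ #(s ∩ u) + #(t ∩ u) := by
    rw [union_inter_distrib_right]
    exact card_union_le _ _
  omega

variable {G : Type*} [AddCommGroup G] [DecidableEq G]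

theorem eq_of_card_eq_three_of_sum_eq_zero {S : Finset G} (hS : #S = 3) (hS0 : S.sum id = 0)
    {p q : G} (hp : p ∈ S) (hq : q ∈ S) (hpq : p ≠ q) : S = {p, q, -(p + q)} := by
  obtain ⟨r, hr⟩ := card_eq_one.mp (show #((S.erase p).erase q) = 1 by
    rw [card_erase_of_mem (mem_erase.mpr ⟨hpq.symm, hq⟩), card_erase_of_mem hp, hS])
  have hr_mem : r ∈ (S.erase p).erase q := hr ▸ mem_singleton_self r
  have hrq : r ≠ q := (mem_erase.mp hr_mem).1
  have hrp : r ≠ p := (mem_erase.mp (mem_erase.mp hr_mem).2).1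
  have hSeq : S = {p, q, r} := by
    rw [← insert_erase hp, ← insert_erase (mem_erase.mpr ⟨hpq.symm, hq⟩), hr]
  have hr_eq : r = -(p + q) := by
    rw [hSeq, sum_insert (by simp [hpq, hrp.symm]), sum_pair hrq.symm] at hS0
    rw [eq_neg_iff_add_eq_zero, ← hS0]
    simp only [id]
    abel
  rw [hSeq, hr_eq]

theorem card_inter_le_one_of_sum_eq_zero {S T : Finset G} (hS : #S = 3) (hT : #T = 3)
    (hS0 : S.sum id = 0) (hT0 : T.sum id = 0) (hST : S ≠ T) : #(S ∩ T) ≤ 1 := by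
  by_contra! h
  obtain ⟨p, hp, q, hq, hpq⟩ := one_lt_card.mp h
  rw [mem_inter] at hp hq
  exact hST <| (eq_of_card_eq_three_of_sum_eq_zero hS hS0 hp.1 hq.1 hpq).trans
    (eq_of_card_eq_three_of_sum_eq_zero hT hT0 hp.2 hq.2 hpq).symm

theorem six_le_card_of_two_lt_card_zero_sum_triples (B : Finset G)
    (h : 2 < #((B.powersetCard 3).filter (fun S => S.sum id = 0))) : 6 ≤ #B := by
  obtain ⟨S₁, h₁, S₂, h₂, S₃, h₃, h₁₂, h₁₃, h₂₃⟩ := two_lt_card.mp h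
  simp only [mem_filter, mem_powersetCard] at h₁ h₂ h₃
  have k₁₂ := card_inter_le_one_of_sum_eq_zero h₁.1.2 h₂.1.2 h₁.2 h₂.2 h₁₂
  have k₁₃ := card_inter_le_one_of_sum_eq_zero h₁.1.2 h₃.1.2 h₁.2 h₃.2 h₁₃
  have k₂₃ := card_inter_le_one_of_sum_eq_zero h₂.1.2 h₃.1.2 h₂.2 h₃.2 h₂₃
  have hcover := card_add_card_add_card_le_card_union_add_card_inter S₁ S₂ S₃
  have hsub : #(S₁ ∪ S₂ ∪ S₃) ≤ #B :=
    card_le_card (union_subset (union_subset h₁.1.1 h₂.1.1) h₃.1.1)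
  omega

end Finset

theorem stmt3 (B : Finset Pt) (hB : B.card = 5) : numSets B ≤ 2 := by
  by_contra! h
  have := Finset.six_le_card_of_two_lt_card_zero_sum_triples B h
  omega
end

section
/- Any board of 6 distinct points in F_3^4 contains at most 3 sets. -/
/-!
Suppose a 6-point board `B` contained four sets. Two distinct sets share at most one point, so the
sets through a point `p` of `B` cover disjoint pairs of `B \ {p}`, and `p` lies on at most two of
them. Counting incidences (at least `4 * 3 = 12`, at most `6 * 2`), every point lies on exactly two
sets; adding up the set equations then gives `2 • ∑ B = 0`, hence `∑ B = 0` as `2` is invertible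
mod `3`. But then the complement of a set `S` in `B` is again a set, and any set of `B` meets
`S` or `B \ S` in two points, so `S` and `B \ S` are the only sets of `B`.
-/

open Finset

section ZeroSumTriples

variable {G : Type*} [AddCommGroup G] [DecidableEq G]

def IsZeroSumTriple (S : Finset G) : Prop :=
  #S = 3 ∧ ∑ x ∈ S, x = 0

def zeroSumTriples (B : Finset G) : Finset (Finset G) :=
  {S ∈ B.powersetCard 3 | ∑ x ∈ S, x = 0}

theorem mem_zeroSumTriples {B S : Finset G} :
    S ∈ zeroSumTriples B ↔ S ⊆ B ∧ IsZeroSumTriple S := by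
  simp only [zeroSumTriples, mem_filter, mem_powersetCard, IsZeroSumTriple, and_assoc]

theorem IsZeroSumTriple.eq_insert_insert_neg_add {S : Finset G} (hS : IsZeroSumTriple S)
    {p q : G} (hp : p ∈ S) (hq : q ∈ S) (hpq : p ≠ q) : S = {p, q, -(p + q)} := by
  have hq' : q ∈ S.erase p := mem_erase.2 ⟨hpq.symm, hq⟩
  obtain ⟨r, hr⟩ : ∃ r, (S.erase p).erase q = {r} := card_eq_one.1 <| by
    rw [card_erase_of_mem hq', card_erase_of_mem hp, hS.1]
  have hrS : S = {p, q, r} := by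
    rw [← hr, insert_erase hq', insert_erase hp]
  have hr_mem : r ∈ (S.erase p).erase q := hr ▸ mem_singleton_self r
  obtain ⟨hrq, hrp, -⟩ : r ≠ q ∧ r ≠ p ∧ r ∈ S := by simpa only [mem_erase] using hr_mem
  have hsum := hS.2
  rw [hrS, sum_insert (by simp [hpq, hrp.symm]), sum_pair hrq.symm] at hsum
  have hr' : r = -(p + q) := by
    rw [eq_neg_iff_add_eq_zero, ← hsum]
    abel
  rw [hrS, hr']

theorem IsZeroSumTriple.eq_of_one_lt_card_inter {S T : Finset G} (hS : IsZeroSumTriple S)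
    (hT : IsZeroSumTriple T) (h : 1 < #(S ∩ T)) : S = T := by
  obtain ⟨p, hp, q, hq, hpq⟩ := one_lt_card.1 h
  rw [mem_inter] at hp hq
  rw [hS.eq_insert_insert_neg_add hp.1 hq.1 hpq, hT.eq_insert_insert_neg_add hp.2 hq.2 hpq]

theorem sum_sum_eq_sum_card_filter_mem_nsmul {α M : Type*} [DecidableEq α] [AddCommMonoid M]
    {B : Finset α} {𝒯 : Finset (Finset α)} (h𝒯 : ∀ S ∈ 𝒯, S ⊆ B) (f : α → M) :
    ∑ S ∈ 𝒯, ∑ x ∈ S, f x = ∑ x ∈ B, #{S ∈ 𝒯 | x ∈ S} • f x := by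
  rw [sum_comm' (t' := B) (s' := fun x => {S ∈ 𝒯 | x ∈ S})]
  · simp only [sum_const]
  · intro S x
    simp only [mem_filter]
    exact ⟨fun h => ⟨h, h𝒯 S h.1 h.2⟩, fun h => h.1⟩

theorem sum_card_filter_mem_zeroSumTriples (B : Finset G) :
    ∑ x ∈ B, #{S ∈ zeroSumTriples B | x ∈ S} = 3 * #(zeroSumTriples B) := by
  have h := sum_sum_eq_sum_card_filter_mem_nsmul (𝒯 := zeroSumTriples B)
    (fun S hS => (mem_zeroSumTriples.1 hS).1) (fun _ => 1)
  simp only [sum_const, smul_eq_mul, mul_one] at h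
  rw [← h, sum_congr rfl fun S hS => (mem_zeroSumTriples.1 hS).2.1, sum_const, smul_eq_mul,
    mul_comm]

theorem two_mul_card_filter_mem_zeroSumTriples_lt {B : Finset G} {p : G} (hp : p ∈ B) :
    2 * #{S ∈ zeroSumTriples B | p ∈ S} < #B := by
  set 𝒯 := {S ∈ zeroSumTriples B | p ∈ S}
  have hmem : ∀ S ∈ 𝒯, S ⊆ B ∧ IsZeroSumTriple S ∧ p ∈ S := fun S hS => by
    rw [mem_filter, mem_zeroSumTriples] at hS
    exact ⟨hS.1.1, hS.1.2, hS.2⟩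
  have hdisj : (𝒯 : Set (Finset G)).PairwiseDisjoint (·.erase p) := by
    intro S hS T hT hST
    refine disjoint_left.2 fun x hxS hxT => hST ?_
    obtain ⟨-, hS, hpS⟩ := hmem S hS
    obtain ⟨-, hT, hpT⟩ := hmem T hT
    refine hS.eq_of_one_lt_card_inter hT <| one_lt_card.2
      ⟨p, mem_inter.2 ⟨hpS, hpT⟩, x, mem_inter.2 ⟨mem_of_mem_erase hxS, mem_of_mem_erase hxT⟩,
        (ne_of_mem_erase hxS).symm⟩
  have hcard : #(𝒯.biUnion (·.erase p)) = 2 * #𝒯 := by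
    rw [card_biUnion hdisj, sum_const_nat fun S hS => ?_, mul_comm]
    rw [card_erase_of_mem (hmem S hS).2.2, (hmem S hS).2.1.1]
  have hsub : 𝒯.biUnion (·.erase p) ⊆ B.erase p :=
    biUnion_subset.2 fun S hS => erase_subset_erase p (hmem S hS).1
  calc 2 * #𝒯 = #(𝒯.biUnion (·.erase p)) := hcard.symm
    _ ≤ #(B.erase p) := card_le_card hsub
    _ < #B := card_erase_lt_of_mem hp

theorem sum_eq_zero_of_forall_card_filter_mem_zeroSumTriples_eq_two
    (h2 : ∀ x : G, 2 • x = 0 → x = 0) {B : Finset G}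
    (hB : ∀ x ∈ B, #{S ∈ zeroSumTriples B | x ∈ S} = 2) : ∑ x ∈ B, x = 0 := by
  apply h2
  have h := sum_sum_eq_sum_card_filter_mem_nsmul (𝒯 := zeroSumTriples B)
    (fun S hS => (mem_zeroSumTriples.1 hS).1) (fun x => x)
  rw [sum_eq_zero fun S hS => (mem_zeroSumTriples.1 hS).2.2, sum_congr rfl fun x hx => by
    rw [hB x hx]] at h
  rw [smul_sum, h]

theorem sdiff_mem_zeroSumTriples {B S : Finset G} (hB : #B = 6) (hB0 : ∑ x ∈ B, x = 0)
    (hS : S ∈ zeroSumTriples B) : B \ S ∈ zeroSumTriples B := by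
  obtain ⟨hSB, hS3, hS0⟩ := mem_zeroSumTriples.1 hS
  refine mem_zeroSumTriples.2 ⟨sdiff_subset, ?_, ?_⟩
  · rw [card_sdiff_of_subset hSB, hB, hS3]
  · simpa [hS0, hB0] using sum_sdiff hSB (f := fun x => x)

theorem card_zeroSumTriples_le_two {B : Finset G} (hB : #B = 6) (hB0 : ∑ x ∈ B, x = 0) :
    #(zeroSumTriples B) ≤ 2 := by
  obtain h | ⟨S, hSmem⟩ := (zeroSumTriples B).eq_empty_or_nonempty
  · simp [h]
  refine (card_le_card (t := {S, B \ S}) fun U hU => ?_).trans card_le_two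
  have hS := (mem_zeroSumTriples.1 hSmem).2
  have hSc := (mem_zeroSumTriples.1 (sdiff_mem_zeroSumTriples hB hB0 hSmem)).2
  obtain ⟨hUB, hU⟩ := mem_zeroSumTriples.1 hU
  have hsplit : #(U ∩ S) + #(U \ S) = 3 := (card_inter_add_card_sdiff U S).trans hU.1
  have hUS : #(U \ S) ≤ #(U ∩ (B \ S)) :=
    card_le_card (subset_inter sdiff_subset (sdiff_subset_sdiff hUB subset_rfl))
  rw [mem_insert, mem_singleton]
  by_cases h : 1 < #(U ∩ S)
  · exact Or.inl (hU.eq_of_one_lt_card_inter hS h)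
  · exact Or.inr (hU.eq_of_one_lt_card_inter hSc (by omega))

end ZeroSumTriples

theorem eq_zero_of_two_nsmul_eq_zero_of_zmod_three {M : Type*} [AddCommGroup M]
    [Module (ZMod 3) M] {x : M} (h : 2 • x = 0) : x = 0 := by
  rw [← Nat.cast_smul_eq_nsmul (ZMod 3)] at h
  exact (smul_eq_zero.1 h).resolve_left (by decide)

theorem stmt5 (B : Finset Pt) (hB : B.card = 6) : numSets B ≤ 3 := by
  change #(zeroSumTriples B) ≤ 3
  by_contra! h4
  have hdeg : ∀ x ∈ B, #{S ∈ zeroSumTriples B | x ∈ S} ≤ 2 := fun x hx => by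
    have := two_mul_card_filter_mem_zeroSumTriples_lt hx
    omega
  have hincidences : ∑ x ∈ B, #{S ∈ zeroSumTriples B | x ∈ S} = ∑ _x ∈ B, 2 := by
    refine le_antisymm (sum_le_sum hdeg) ?_
    rw [sum_card_filter_mem_zeroSumTriples, sum_const, hB, smul_eq_mul]
    omega
  have hB0 := sum_eq_zero_of_forall_card_filter_mem_zeroSumTriples_eq_two
    (fun _ => eq_zero_of_two_nsmul_eq_zero_of_zmod_three)
    ((sum_eq_sum_iff_of_le hdeg).1 hincidences)
  have := card_zeroSumTriples_le_two hB hB0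
  omega
end

section
/- Any board of 7 distinct points in F_3^4 contains at most 5 sets. -/
/-! Call the sets of a board its lines. Two lines sharing two points coincide, since the third
point of a line through `a ≠ b` is `-(a + b)`. Hence the lines through a point `p` of a 7-point
board `B` meet only in `p`, so there are at most 3 of them, and if there are exactly 3 they cover
`B`. Summing `B` along those three lines gives `∑ B = -2p = p` in characteristic 3, so at most one
point lies on 3 lines. Counting incidences, `3 · #lines ≤ 3 + 6 · 2`. -/

open Finset

namespace SetGame

variable {G : Type*} [AddCommGroup G] [DecidableEq G]

def IsLine (S : Finset G) : Prop := #S = 3 ∧ S.sum id = 0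

def lines (B : Finset G) : Finset (Finset G) :=
  (B.powersetCard 3).filter fun S => S.sum id = 0

def linesThrough (B : Finset G) (p : G) : Finset (Finset G) :=
  (lines B).filter (p ∈ ·)

theorem mem_lines {B S : Finset G} : S ∈ lines B ↔ S ⊆ B ∧ IsLine S := by
  simp [lines, IsLine, mem_powersetCard, and_assoc]

theorem mem_linesThrough {B S : Finset G} {p : G} :
    S ∈ linesThrough B p ↔ S ⊆ B ∧ IsLine S ∧ p ∈ S := by
  simp [linesThrough, mem_lines, and_assoc]

namespace IsLine

variable {S T : Finset G} {a b : G}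

theorem sum_erase (hS : IsLine S) (ha : a ∈ S) : ∑ x ∈ S.erase a, x = -a :=
  eq_neg_of_add_eq_zero_right ((add_sum_erase S id ha).trans hS.2)

theorem eq_insert (hS : IsLine S) (ha : a ∈ S) (hb : b ∈ S) (hab : a ≠ b) :
    S = {a, b, -(a + b)} := by
  have hb' : b ∈ S.erase a := mem_erase.2 ⟨hab.symm, hb⟩
  obtain ⟨c, hc⟩ : ∃ c, (S.erase a).erase b = {c} := by
    rw [← card_eq_one, card_erase_of_mem hb', card_erase_of_mem ha, hS.1]
  have hbc : b + c = -a := by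
    rw [← hS.sum_erase ha, ← add_sum_erase _ (fun x => x) hb', hc, sum_singleton]
  have hc' : -(a + b) = c := by rw [neg_add_rev, ← hbc, neg_add_cancel_left]
  rw [← insert_erase ha, ← insert_erase hb', hc, hc']

theorem eq_of_mem (hS : IsLine S) (hT : IsLine T) (haS : a ∈ S) (hbS : b ∈ S) (haT : a ∈ T)
    (hbT : b ∈ T) (hab : a ≠ b) : S = T := by
  rw [hS.eq_insert haS hbS hab, hT.eq_insert haT hbT hab]

end IsLine

theorem sum_card_linesThrough (B : Finset G) :
    ∑ p ∈ B, #(linesThrough B p) = 3 * #(lines B) :=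
  calc ∑ p ∈ B, #(linesThrough B p) = ∑ S ∈ lines B, #{p ∈ B | p ∈ S} :=
        sum_card_bipartiteAbove_eq_sum_card_bipartiteBelow (r := (· ∈ ·))
    _ = 3 * #(lines B) := by
        rw [sum_const_nat fun S hS => ?_, mul_comm]
        obtain ⟨hSB, hS⟩ := mem_lines.1 hS
        rw [filter_mem_eq_inter, inter_eq_right.2 hSB, hS.1]

variable {B : Finset G} {p : G}

theorem pairwiseDisjoint_erase_linesThrough :
    (linesThrough B p : Set (Finset G)).PairwiseDisjoint (·.erase p) := by
  intro S hS T hT hST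
  rw [Function.onFun, disjoint_left]
  intro q hqS hqT
  obtain ⟨-, hS, hpS⟩ := mem_linesThrough.1 hS
  obtain ⟨-, hT, hpT⟩ := mem_linesThrough.1 hT
  exact hST (hS.eq_of_mem hT hpS (mem_of_mem_erase hqS) hpT (mem_of_mem_erase hqT)
    (ne_of_mem_erase hqS).symm)

theorem biUnion_erase_linesThrough_subset :
    (linesThrough B p).biUnion (·.erase p) ⊆ B.erase p := by
  intro q hq
  obtain ⟨S, hS, hqS⟩ := mem_biUnion.1 hq
  exact erase_subset_erase p (mem_linesThrough.1 hS).1 hqS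

theorem card_biUnion_erase_linesThrough :
    #((linesThrough B p).biUnion (·.erase p)) = 2 * #(linesThrough B p) := by
  rw [card_biUnion pairwiseDisjoint_erase_linesThrough, sum_const_nat fun S hS => ?_, mul_comm]
  obtain ⟨-, hS, hpS⟩ := mem_linesThrough.1 hS
  rw [card_erase_of_mem hpS, hS.1]

theorem two_mul_card_linesThrough_add_one_le (hp : p ∈ B) :
    2 * #(linesThrough B p) + 1 ≤ #B := by
  have hsub := card_le_card (biUnion_erase_linesThrough_subset (B := B) (p := p))
  rw [card_biUnion_erase_linesThrough, card_erase_of_mem hp] at hsub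
  have hpos := card_pos.2 ⟨p, hp⟩
  omega

theorem sum_eq_sub_of_two_mul_card_linesThrough_add_one_eq (hp : p ∈ B)
    (h : 2 * #(linesThrough B p) + 1 = #B) : ∑ x ∈ B, x = p - #(linesThrough B p) • p := by
  have hcover : (linesThrough B p).biUnion (·.erase p) = B.erase p := by
    refine eq_of_subset_of_card_le biUnion_erase_linesThrough_subset ?_
    rw [card_biUnion_erase_linesThrough, card_erase_of_mem hp]
    omega
  rw [← add_sum_erase B (fun x => x) hp, ← hcover, sum_biUnion pairwiseDisjoint_erase_linesThrough,
    sum_congr rfl fun S hS => (mem_linesThrough.1 hS).2.1.sum_erase (mem_linesThrough.1 hS).2.2,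
    sum_const, smul_neg, ← sub_eq_add_neg]

variable [Module (ZMod 3) G]

theorem eq_sum_of_card_linesThrough_eq_three (hp : p ∈ B) (hB : #B = 7)
    (h : #(linesThrough B p) = 3) : p = ∑ x ∈ B, x := by
  rw [sum_eq_sub_of_two_mul_card_linesThrough_add_one_eq hp (by omega), h,
    ← Nat.cast_smul_eq_nsmul (ZMod 3), ZMod.natCast_self, zero_smul, sub_zero]

theorem card_lines_le_five (hB : #B = 7) : #(lines B) ≤ 5 := by
  have hdeg : ∀ p ∈ B, #(linesThrough B p) ≤ 2 + if ∑ x ∈ B, x = p then 1 else 0 := by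
    intro p hp
    have hle := two_mul_card_linesThrough_add_one_le hp
    split_ifs with hs
    · omega
    · have : #(linesThrough B p) ≠ 3 := fun h =>
        hs (eq_sum_of_card_linesThrough_eq_three hp hB h).symm
      omega
  have hsum : ∑ p ∈ B, (2 + if ∑ x ∈ B, x = p then 1 else 0) ≤ 15 := by
    rw [sum_add_distrib, sum_const, sum_ite_eq, hB]
    split_ifs <;> simp
  have hcount := sum_card_linesThrough B
  have hle := sum_le_sum hdeg
  omega

end SetGame

theorem stmt8 (B : Finset Pt) (hB : B.card = 7) : numSets B ≤ 5 :=
  SetGame.card_lines_le_five hB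
end

section
/- Any board of 9 distinct points in F_3^4 contains at most 12 sets, and the bound is achieved exactly when the board is a 2-dimensional affine subspace (magic square). -/
open Finset Module

theorem finrank_eq_of_natCard_eq_pow {K W : Type*} [DivisionRing K] [Fintype K] [AddCommGroup W]
    [Module K W] {k : ℕ} (h : Nat.card W = Fintype.card K ^ k) : finrank K W = k := by
  have : Finite W :=
    Nat.finite_of_card_ne_zero (by rw [h]; exact pow_ne_zero _ Fintype.card_ne_zero)
  have : Fintype W := Fintype.ofFinite W
  rw [Nat.card_eq_fintype_card, card_eq_pow_finrank (K := K)] at h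
  exact Nat.pow_right_injective Fintype.one_lt_card h

section

variable {V : Type*} [AddCommGroup V]

def ThirdPointClosed (B : Finset V) : Prop := ∀ a ∈ B, ∀ b ∈ B, -a - b ∈ B

variable [Module (ZMod 3) V]

lemma add_add_self_eq_zero (x : V) : x + x + x = 0 := by
  have h : ((3 : ℕ) : ZMod 3) • x = 0 := by rw [ZMod.natCast_self, zero_smul]
  rwa [Nat.cast_smul_eq_nsmul, succ_nsmul, two_nsmul] at h

lemma neg_sub_self (x : V) : -x - x = x := by
  linear_combination (norm := module) -add_add_self_eq_zero x

lemma neg_sub_ne_left {p q : V} (hpq : p ≠ q) : -p - q ≠ p := fun h =>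
  hpq (by linear_combination (norm := module) h + add_add_self_eq_zero p)

lemma neg_sub_ne_right {p q : V} (hpq : p ≠ q) : -p - q ≠ q := fun h =>
  hpq (by linear_combination (norm := module) -h - add_add_self_eq_zero q)

end

section

variable {V : Type*} [AddCommGroup V] [DecidableEq V]

lemma eq_triple_neg_sub {S : Finset V} {p q : V} (hS : #S = 3) (hsum : ∑ x ∈ S, x = 0)
    (hp : p ∈ S) (hq : q ∈ S) (hpq : p ≠ q) : S = {p, q, -p - q} := by
  have hq' : q ∈ S.erase p := mem_erase.2 ⟨hpq.symm, hq⟩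
  obtain ⟨r, hr⟩ := card_eq_one.1 <| by
    rw [card_erase_of_mem hq', card_erase_of_mem hp, hS]
  have hrS : r ∈ (S.erase p).erase q := by simp [hr]
  have hSr : S = {p, q, r} := by rw [← hr, insert_erase hq', insert_erase hp]
  obtain ⟨hrq, hrp, -⟩ : r ≠ q ∧ r ≠ p ∧ r ∈ S := by simpa using hrS
  rw [hSr, sum_insert (by simp [hpq, hrp.symm]), sum_pair hrq.symm] at hsum
  rw [hSr, show r = -p - q by linear_combination (norm := module) hsum]

def setsIn (B : Finset V) : Finset (Finset V) := {S ∈ B.powersetCard 3 | S.sum id = 0}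

def setsThrough (B : Finset V) (p : V) : Finset (Finset V) := {S ∈ setsIn B | p ∈ S}

def partners (B : Finset V) (p : V) : Finset V := {q ∈ B.erase p | -p - q ∈ B}

variable {B : Finset V} {p q : V} {S : Finset V}

lemma mem_setsIn : S ∈ setsIn B ↔ S ⊆ B ∧ #S = 3 ∧ ∑ x ∈ S, x = 0 := by
  simp [setsIn, mem_powersetCard, and_assoc]

lemma eq_triple_of_mem_setsThrough (hS : S ∈ setsThrough B p) (hq : q ∈ S) (hpq : p ≠ q) :
    S = {p, q, -p - q} := by
  obtain ⟨hS, hp⟩ := mem_filter.1 hS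
  obtain ⟨-, h3, hsum⟩ := mem_setsIn.1 hS
  exact eq_triple_neg_sub h3 hsum hp hq hpq

lemma three_mul_card_setsIn (B : Finset V) :
    3 * #(setsIn B) = ∑ p ∈ B, #(setsThrough B p) := by
  calc 3 * #(setsIn B) = ∑ S ∈ setsIn B, #{p ∈ B | p ∈ S} := by
        rw [mul_comm]
        refine (sum_const_nat fun S hS => ?_).symm
        obtain ⟨hSB, h3, -⟩ := mem_setsIn.1 hS
        rw [filter_mem_eq_inter, inter_eq_right.2 hSB, h3]
    _ = ∑ p ∈ B, #(setsThrough B p) :=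
        (sum_card_bipartiteAbove_eq_sum_card_bipartiteBelow _).symm

lemma card_partners_le (hp : p ∈ B) : #(partners B p) ≤ #B - 1 :=
  card_erase_of_mem hp ▸ card_filter_le _ _

variable [Module (ZMod 3) V]

lemma card_triple_neg_sub (hpq : p ≠ q) : #{p, q, -p - q} = 3 := by
  rw [card_insert_of_notMem (by simp [hpq, (neg_sub_ne_left hpq).symm]),
    card_pair (neg_sub_ne_right hpq).symm]

lemma sum_triple_neg_sub (hpq : p ≠ q) : ∑ x ∈ {p, q, -p - q}, x = 0 := by
  rw [sum_insert (by simp [hpq, (neg_sub_ne_left hpq).symm]),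
    sum_pair (neg_sub_ne_right hpq).symm]
  abel

lemma triple_mem_setsThrough (hpq : p ≠ q) (hp : p ∈ B) (hq : q ∈ B) (hr : -p - q ∈ B) :
    {p, q, -p - q} ∈ setsThrough B p := by
  have hsub : {p, q, -p - q} ⊆ B := by simp [insert_subset_iff, hp, hq, hr]
  have hset : {p, q, -p - q} ∈ setsIn B :=
    mem_setsIn.2 ⟨hsub, card_triple_neg_sub hpq, sum_triple_neg_sub hpq⟩
  exact mem_filter.2 ⟨hset, mem_insert_self _ _⟩

lemma partners_eq_biUnion (hp : p ∈ B) :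
    partners B p = (setsThrough B p).biUnion (·.erase p) := by
  ext q
  simp only [partners, mem_filter, mem_erase, mem_biUnion]
  constructor
  · rintro ⟨⟨hqp, hq⟩, hr⟩
    exact ⟨_, triple_mem_setsThrough (Ne.symm hqp) hp hq hr, hqp, by simp⟩
  · rintro ⟨S, hS, hqp, hqS⟩
    have hSB := (mem_setsIn.1 (mem_filter.1 hS).1).1
    have hS' := eq_triple_of_mem_setsThrough hS hqS (Ne.symm hqp)
    exact ⟨⟨hqp, hSB hqS⟩, hSB (by simp [hS'])⟩

lemma card_partners (hp : p ∈ B) : #(partners B p) = 2 * #(setsThrough B p) := by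
  rw [partners_eq_biUnion hp, card_biUnion, sum_const_nat, mul_comm]
  · intro S hS
    rw [card_erase_of_mem (mem_filter.1 hS).2, (mem_setsIn.1 (mem_filter.1 hS).1).2.1]
  · intro S hS T hT hST
    refine disjoint_left.2 fun q hqS hqT => hST ?_
    have hqp := ne_of_mem_erase hqS
    rw [eq_triple_of_mem_setsThrough hS (mem_of_mem_erase hqS) (Ne.symm hqp),
      eq_triple_of_mem_setsThrough hT (mem_of_mem_erase hqT) (Ne.symm hqp)]

lemma card_partners_eq_iff (hp : p ∈ B) :
    #(partners B p) = #B - 1 ↔ ∀ q ∈ B, -p - q ∈ B := by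
  rw [partners, ← card_erase_of_mem hp, card_filter_eq_iff]
  refine ⟨fun h q hq => ?_, fun h q hq => h q (mem_of_mem_erase hq)⟩
  obtain rfl | hqp := eq_or_ne q p
  · rwa [neg_sub_self]
  · exact h q (mem_erase.2 ⟨hqp, hq⟩)

variable (B) in
lemma six_mul_card_setsIn : 6 * #(setsIn B) = ∑ p ∈ B, #(partners B p) := by
  rw [show 6 = 2 * 3 from rfl, mul_assoc, three_mul_card_setsIn, mul_sum]
  exact sum_congr rfl fun p hp => (card_partners hp).symm

variable (B) in
theorem six_mul_card_setsIn_le : 6 * #(setsIn B) ≤ #B * (#B - 1) := by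
  rw [six_mul_card_setsIn, ← smul_eq_mul, ← sum_const]
  exact sum_le_sum fun p hp => card_partners_le hp

variable (B) in
theorem six_mul_card_setsIn_eq_iff : 6 * #(setsIn B) = #B * (#B - 1) ↔ ThirdPointClosed B := by
  rw [six_mul_card_setsIn, ← smul_eq_mul, ← sum_const,
    sum_eq_sum_iff_of_le fun p hp => card_partners_le hp]
  exact forall₂_congr fun p hp => card_partners_eq_iff hp

end

section

variable {V : Type*} [AddCommGroup V] [Module (ZMod 3) V] {B : Finset V} {p : V}

lemma thirdPointClosed_of_coe_eq_image {W : Submodule (ZMod 3) V}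
    (h : (B : Set V) = (p + ·) '' W) : ThirdPointClosed B := by
  intro a ha b hb
  rw [← mem_coe, h] at ha hb ⊢
  obtain ⟨v, hv, rfl⟩ := ha
  obtain ⟨w, hw, rfl⟩ := hb
  exact ⟨-v - w, W.sub_mem (W.neg_mem hv) hw,
    by linear_combination (norm := module) add_add_self_eq_zero p⟩

lemma ThirdPointClosed.exists_submodule (hB : ThirdPointClosed B) (hp : p ∈ B) :
    ∃ W : Submodule (ZMod 3) V, (B : Set V) = (p + ·) '' W := by
  let W : AddSubgroup V :=
    { carrier := {v | p + v ∈ B}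
      zero_mem' := by simpa using hp
      add_mem' := fun {v w} hv hw => by
        show p + (v + w) ∈ B
        simpa only [show -p - (-(p + v) - (p + w)) = p + (v + w) by abel]
          using hB p hp _ (hB _ hv _ hw)
      neg_mem' := fun {v} hv => by
        show p + -v ∈ B
        simpa only [show -p - (p + v) = p + -v by
          linear_combination (norm := module) -add_add_self_eq_zero p] using hB p hp _ hv }
  refine ⟨AddSubgroup.toZModSubmodule 3 W, Set.ext fun x => ?_⟩
  simp only [mem_coe, AddSubgroup.coe_toZModSubmodule, Set.mem_image]
  refine ⟨fun hx => ⟨x - p, show p + (x - p) ∈ B by simpa using hx, by abel⟩, ?_⟩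
  rintro ⟨v, hv, rfl⟩
  exact hv

end

lemma numSets_eq_card_setsIn (B : Finset Pt) : numSets B = #(setsIn B) := rfl

lemma isMagicSquare_iff_thirdPointClosed {B : Finset Pt} (hB : #B = 9) :
    IsMagicSquare B ↔ ThirdPointClosed B := by
  refine ⟨fun ⟨p, W, _, h⟩ => thirdPointClosed_of_coe_eq_image h, fun hcl => ?_⟩
  obtain ⟨p, hp⟩ := card_pos.1 (by omega : 0 < #B)
  obtain ⟨W, hW⟩ := hcl.exists_submodule hp
  refine ⟨p, W, finrank_eq_of_natCard_eq_pow ?_, hW⟩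
  change Nat.card (W : Set Pt) = _
  rw [ZMod.card, ← Nat.card_image_of_injective (add_right_injective p), ← hW,
    Nat.card_coe_set_eq, Set.ncard_coe_finset, hB]
  rfl

theorem stmt11 (B : Finset Pt) (hB : B.card = 9) :
    numSets B ≤ 12 ∧ (numSets B = 12 ↔ IsMagicSquare B) := by
  have hle := six_mul_card_setsIn_le B
  rw [hB] at hle
  rw [numSets_eq_card_setsIn, isMagicSquare_iff_thirdPointClosed hB,
    ← six_mul_card_setsIn_eq_iff, hB]
  omega
end

section
/- Removing one point from a 2-dimensional affine subspace of F_3^4 yields an 8-point board containing exactly 8 sets, with each of the 8 points lying in exactly 3 sets. -/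
/-!
A magic square is the image of the standard plane `(ZMod 3)²` under an injective affine map
`w ↦ p + L w`. Over `ZMod 3` such a map sends a 3-element sum `∑ w` to `3 • p + L (∑ w) = L (∑ w)`,
so it matches sets with sets, and both counts can be read off the standard plane, where they are
checked by evaluation.
-/

open Finset

section AffineEmbedding

variable {M N : Type*} [AddCommGroup M] [Module (ZMod 3) M] [AddCommGroup N] [Module (ZMod 3) N]

def affineEmbedding (p : N) (L : M →ₗ[ZMod 3] N) (hL : Function.Injective L) : M ↪ N :=
  ⟨fun w => p + L w, (add_right_injective p).comp hL⟩

lemma sum_add_linearMap_of_card_eq_three (p : N) (L : M →ₗ[ZMod 3] N) {S : Finset M}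
    (hS : #S = 3) : ∑ w ∈ S, (p + L w) = L (∑ w ∈ S, w) := by
  rw [sum_add_distrib, sum_const, hS, ZModModule.char_nsmul_eq_zero, zero_add, map_sum]

lemma sum_affineEmbedding_eq_zero_iff (p : N) {L : M →ₗ[ZMod 3] N} (hL : Function.Injective L)
    {S : Finset M} (hS : #S = 3) :
    (S.map (affineEmbedding p L hL)).sum id = 0 ↔ ∑ w ∈ S, w = 0 := by
  rw [sum_map]
  change ∑ w ∈ S, (p + L w) = 0 ↔ _
  rw [sum_add_linearMap_of_card_eq_three p L hS, map_eq_zero_iff L hL]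

end AffineEmbedding

lemma card_filter_powersetCard_map {α β : Type*} [DecidableEq β] (f : α ↪ β) (s : Finset α)
    (k : ℕ) (P : Finset β → Prop) [DecidablePred P] :
    #(((s.map f).powersetCard k).filter P) = #((s.powersetCard k).filter (fun T => P (T.map f))) := by
  rw [powersetCard_map, filter_map, card_map]
  rfl

lemma IsMagicSquare.exists_eq_map {B : Finset Pt} (hB : IsMagicSquare B) :
    ∃ (p : Pt) (L : (Fin 2 → ZMod 3) →ₗ[ZMod 3] Pt) (hL : Function.Injective L),
      B = univ.map (affineEmbedding p L hL) := by
  obtain ⟨p, V, hV, hBV⟩ := hB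
  let e : V ≃ₗ[ZMod 3] (Fin 2 → ZMod 3) := LinearEquiv.ofFinrankEq _ _ (by simpa using hV)
  refine ⟨p, V.subtype ∘ₗ e.symm.toLinearMap, Subtype.val_injective.comp e.symm.injective, ?_⟩
  apply coe_injective
  rw [hBV, coe_map, coe_univ, Set.image_univ]
  change _ = Set.range ((fun v => p + v) ∘ Subtype.val ∘ e.symm)
  rw [Set.range_comp, e.symm.surjective.range_comp, Subtype.range_coe]

lemma card_zeroSum_triples_plane_erase : ∀ w₀ : Fin 2 → ZMod 3,
    #(((univ.erase w₀).powersetCard 3).filter (fun S => ∑ w ∈ S, w = 0)) = 8 := by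
  decide

lemma card_zeroSum_triples_mem_plane_erase : ∀ w₀ w : Fin 2 → ZMod 3, w ≠ w₀ →
    #(((univ.erase w₀).powersetCard 3).filter (fun S => w ∈ S ∧ ∑ v ∈ S, v = 0)) = 3 := by
  decide

theorem stmt13 (B : Finset Pt) (hB : IsMagicSquare B) (x : Pt) (hx : x ∈ B) :
    numSets (B.erase x) = 8 ∧
    ∀ y ∈ B.erase x,
      (((B.erase x).powersetCard 3).filter (fun S => y ∈ S ∧ S.sum id = 0)).card = 3 := by
  obtain ⟨p, L, hL, rfl⟩ := hB.exists_eq_map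
  obtain ⟨w₀, -, rfl⟩ := mem_map.mp hx
  set f := affineEmbedding p L hL
  have hsum : ∀ T ∈ (univ.erase w₀).powersetCard 3, ((T.map f).sum id = 0 ↔ ∑ w ∈ T, w = 0) :=
    fun T hT => sum_affineEmbedding_eq_zero_iff p hL (mem_powersetCard.mp hT).2
  rw [← map_erase]
  refine ⟨?_, fun _ hy => ?_⟩
  · rw [numSets, card_filter_powersetCard_map, filter_congr hsum]
    exact card_zeroSum_triples_plane_erase w₀
  · obtain ⟨w, hw, rfl⟩ := mem_map.mp hy
    rw [card_filter_powersetCard_map,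
      filter_congr fun T hT => and_congr (mem_map' f) (hsum T hT)]
    exact card_zeroSum_triples_mem_plane_erase w₀ w (ne_of_mem_erase hw)
end
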